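/- Let F be a CNF formula with Boolean variables x_1,…,x_{n_x} and clauses C_1,…,C_{n_c}. Let T_i = {j : x_i appears positively in C_j} and F_i = {j : x_i appears negatively in C_j}. Consider spanner variables v_{i,j} for i ∈ [n_x], j ∈ [n_c] and an extra variable a, and define on the empty document ε: (i) the mappings of r_valid are, for each truth assignment b : [n_x] → {true, false}, the mapping that assigns v_{i,j} := [0,0⟩ for all j ∈ T_i when b(i) = true and for all j ∈ F_i when b(i) = false, and assigns nothing else; (ii) the mappings of r_mask are, for each k ∈ [n_c], the mapping assigning a := [0,0⟩ and v_{i,j} := [0,0⟩ for all i ∈ [n_x] and all j ∈ [n_c] \ {k}. Let M be the union of these two sets of mappings. Then F is satisfiable if and only if the set of mappings of M that are maximal under the variable inclusion domination relation has at least n_c + 1 elements. -/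

import Mathlib

namespace DocSpanners

/-- A span: a pair of endpoint positions `[i, j⟩`. -/
abbrev Span : Type := ℕ × ℕ

/-- `s` is a span of document `d`. -/
def IsSpanOf {α : Type} (d : List α) (s : Span) : Prop :=
  s.1 ≤ s.2 ∧ s.2 ≤ d.length

/-- A (schemaless) mapping over variable type `V`: a partial assignment of spans. -/
abbrev Mapping (V : Type) : Type := V → Option Span

/-- `m` is a mapping of document `d`. -/
def MappingOf {α V : Type} (d : List α) (m : Mapping V) : Prop :=
  ∀ x s, m x = some s → IsSpanOf d s

/-- A spanner: maps documents to sets of mappings. -/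
abbrev Spanner (α V : Type) : Type := List α → Set (Mapping V)

/-- Labels of a variable-set automaton: letters and variable markers. -/
inductive Label (α V : Type) : Type where
  | letter (a : α)
  | vopen (x : V)
  | vclose (x : V)
deriving DecidableEq

/-- The sequence of letters of a ref-word. -/
def letters {α V : Type} (w : List (Label α V)) : List α :=
  w.filterMap fun l => match l with
    | Label.letter a => some a
    | _ => none

/-- A ref-word is valid if for each variable, either its markers do not appear, or
the opening and closing markers appear exactly once with the opening first. -/
def ValidRef {α V : Type} [DecidableEq α] [DecidableEq V] (w : List (Label α V)) : Prop :=
  ∀ x : V,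
    (Label.vopen x ∉ w ∧ Label.vclose x ∉ w) ∨
    (w.count (Label.vopen x) = 1 ∧ w.count (Label.vclose x) = 1 ∧
      w.idxOf (Label.vopen x) < w.idxOf (Label.vclose x))

/-- The mapping defined by a (valid) ref-word: each marked variable is sent to the
span delimited by the positions at which its markers are read. -/
def refMapping {α V : Type} [DecidableEq α] [DecidableEq V] (w : List (Label α V)) :
    Mapping V := fun x =>
  if Label.vopen x ∈ w then
    some ((letters (w.take (w.idxOf (Label.vopen x)))).length,
          (letters (w.take (w.idxOf (Label.vclose x)))).length)
  else none

/-- A variable-set automaton with state type `Q`. -/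
structure VA (α V Q : Type) : Type where
  init : Q
  final : Set Q
  trans : Q → Label α V → Q → Prop

/-- Paths in a VA. -/
inductive VA.Path {α V Q : Type} (A : VA α V Q) : Q → List (Label α V) → Q → Prop where
  | nil (q : Q) : VA.Path A q [] q
  | cons {q q' q'' : Q} {l : Label α V} {w : List (Label α V)} :
      A.trans q l q' → VA.Path A q' w q'' → VA.Path A q (l :: w) q''

/-- The VA accepts the ref-word `w` (an accepting run reads `w`). -/
def VA.AcceptsRef {α V Q : Type} (A : VA α V Q) (w : List (Label α V)) : Prop :=
  ∃ qf ∈ A.final, A.Path A.init w qf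

/-- A VA is sequential if every accepting run is valid. -/
def VA.Sequential {α V Q : Type} [DecidableEq α] [DecidableEq V] (A : VA α V Q) : Prop :=
  ∀ w, A.AcceptsRef w → ValidRef w

/-- The spanner defined by a (sequential) VA. -/
def VA.spanner {α V Q : Type} [DecidableEq α] [DecidableEq V] (A : VA α V Q) :
    Spanner α V := fun d =>
  {m | ∃ w, A.AcceptsRef w ∧ letters w = d ∧ refMapping w = m}

/-- A spanner is regular if it is defined by some sequential VA with finitely many states. -/
def IsRegular {α V : Type} [DecidableEq α] [DecidableEq V] (P : Spanner α V) : Prop :=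
  ∃ (Q : Type) (_ : Fintype Q) (A : VA α V Q), A.Sequential ∧ A.spanner = P

/-- The skyline operator: keep only the mappings of `P d` that are maximal under `R d`. -/
def skyline {α V : Type} (P : Spanner α V)
    (R : List α → Mapping V → Mapping V → Prop) : Spanner α V := fun d =>
  {m | m ∈ P d ∧ ∀ m' ∈ P d, m' ≠ m → ¬ R d m m'}

/-- The variable inclusion domination relation: `m2` extends `m1`. -/
def varIncRel {V : Type} (m1 m2 : Mapping V) : Prop :=
  ∀ x s, m1 x = some s → m2 x = some s

/-- Two mappings have the same domain. -/
def sameDom {V : Type} (m1 m2 : Mapping V) : Prop :=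
  ∀ x, m1 x = none ↔ m2 x = none

/-- The span inclusion domination relation. -/
def spanIncRel {V : Type} (m1 m2 : Mapping V) : Prop :=
  sameDom m1 m2 ∧
    ∀ x s1 s2, m1 x = some s1 → m2 x = some s2 → s2.1 ≤ s1.1 ∧ s1.2 ≤ s2.2

/-- The left-to-right domination relation: same start, `m2` no shorter. -/
def ltrRel {V : Type} (m1 m2 : Mapping V) : Prop :=
  sameDom m1 m2 ∧
    ∀ x s1 s2, m1 x = some s1 → m2 x = some s2 →
      s1.1 = s2.1 ∧ s1.2 - s1.1 ≤ s2.2 - s2.1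

/-- The span length domination relation: `m2`'s spans are no shorter. -/
def spanLenRel {V : Type} (m1 m2 : Mapping V) : Prop :=
  sameDom m1 m2 ∧
    ∀ x s1 s2, m1 x = some s1 → m2 x = some s2 → s1.2 - s1.1 ≤ s2.2 - s2.1


/-- The mapping of `r_valid` on the empty document corresponding to the truth
assignment `b`: it assigns `v_{i,j} := [0,0⟩` exactly when the assignment of `x_i`
under `b` makes it appear satisfyingly in clause `C_j`. -/
def validMap {nx nc : ℕ} (pos neg : Fin nx → Fin nc → Bool) (b : Fin nx → Bool) :
    Mapping ((Fin nx × Fin nc) ⊕ Unit) := fun y =>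
  match y with
  | Sum.inl (i, j) => if (b i && pos i j) || (!(b i) && neg i j) then some (0, 0) else none
  | Sum.inr _ => none

/-- The `k`-th mapping of `r_mask` on the empty document: it assigns `a := [0,0⟩` and
`v_{i,j} := [0,0⟩` for all `i` and all `j ≠ k`. -/
def maskMap {nx nc : ℕ} (k : Fin nc) : Mapping ((Fin nx × Fin nc) ⊕ Unit) := fun y =>
  match y with
  | Sum.inl (_, j) => if j = k then none else some (0, 0)
  | Sum.inr _ => some (0, 0)

/-- The union of the mappings of `r_valid` and `r_mask` on the empty document. -/
def allMaps {nx nc : ℕ} (pos neg : Fin nx → Fin nc → Bool) :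
    Set (Mapping ((Fin nx × Fin nc) ⊕ Unit)) :=
  {m | (∃ b, m = validMap pos neg b) ∨ ∃ k, m = maskMap k}

/-! On the empty document every span is `[0,0⟩`, so `m ≼ m'` just says that the domain of `m`
is contained in that of `m'`. The `k`-th mask is the only kind of mapping defining `a` and misses
exactly the column `v_{·,k}`, so (given any variable `x_i`) the `n_c` masks are pairwise
incomparable and all maximal, and the mapping of an assignment `b` lies below the `k`-th mask iff
`b` satisfies no literal of `C_k`. Hence the skyline exceeds the masks iff some maximal mapping
comes from `r_valid`, iff some assignment satisfies every clause: for such `b`, a maximal mapping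
above that of `b` cannot be a mask. -/

section VarInc

variable {V : Type}

theorem varIncRel_refl (m : Mapping V) : varIncRel m m := fun _ _ h => h

theorem varIncRel_trans {m₁ m₂ m₃ : Mapping V} (h₁₂ : varIncRel m₁ m₂)
    (h₂₃ : varIncRel m₂ m₃) : varIncRel m₁ m₃ :=
  fun x s h => h₂₃ x s (h₁₂ x s h)

theorem varIncRel_antisymm {m₁ m₂ : Mapping V} (h₁₂ : varIncRel m₁ m₂)
    (h₂₁ : varIncRel m₂ m₁) : m₁ = m₂ := by
  funext x
  cases h : m₁ x with
  | some s => exact (h₁₂ x s h).symm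
  | none =>
    cases h' : m₂ x with
    | none => rfl
    | some s => simpa [h] using h₂₁ x s h'

def varIncSkyline (s : Set (Mapping V)) : Set (Mapping V) :=
  {m ∈ s | ∀ m' ∈ s, m' ≠ m → ¬ varIncRel m m'}

theorem exists_varIncRel_mem_varIncSkyline {s : Set (Mapping V)} (hs : s.Finite)
    {m : Mapping V} (hm : m ∈ s) : ∃ m' ∈ varIncSkyline s, varIncRel m m' := by
  let varIncPreorder : Preorder (Mapping V) :=
    { le := varIncRel
      le_refl := varIncRel_refl
      le_trans := fun _ _ _ => varIncRel_trans }
  obtain ⟨m', hmm', hmax⟩ := @Set.Finite.exists_le_maximal _ varIncPreorder _ _ hs hm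
  exact ⟨m', ⟨hmax.1, fun m'' hm'' hne h => hne (varIncRel_antisymm (hmax.2 hm'' h) h)⟩, hmm'⟩

end VarInc

variable {nx nc : ℕ} (pos neg : Fin nx → Fin nc → Bool)

def SatisfiesClause (b : Fin nx → Bool) (j : Fin nc) : Prop :=
  ∃ i : Fin nx, (pos i j = true ∧ b i = true) ∨ (neg i j = true ∧ b i = false)

theorem allMaps_eq : allMaps pos neg = Set.range (validMap pos neg) ∪ Set.range maskMap := by
  ext m
  simp only [allMaps, Set.mem_ofPred_eq, Set.mem_union, Set.mem_range, eq_comm]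

theorem allMaps_finite : (allMaps pos neg).Finite := by
  rw [allMaps_eq]
  exact (Set.finite_range _).union (Set.finite_range _)

theorem validMap_ne_maskMap (b : Fin nx → Bool) (k : Fin nc) : validMap pos neg b ≠ maskMap k :=
  fun h => by simpa [validMap, maskMap] using congrFun h (Sum.inr ())

theorem maskMap_injective (i : Fin nx) : Function.Injective (maskMap (nx := nx) (nc := nc)) := by
  intro k k' h
  by_contra hne
  simpa [maskMap, Ne.symm hne] using congrFun h (Sum.inl (i, k'))

theorem maskMap_mem_varIncSkyline (i : Fin nx) (k : Fin nc) :
    maskMap k ∈ varIncSkyline (allMaps pos neg) := by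
  refine ⟨Or.inr ⟨k, rfl⟩, ?_⟩
  rintro m' (⟨b, rfl⟩ | ⟨k', rfl⟩) hne hinc
  · simpa [validMap, maskMap] using hinc (Sum.inr ()) (0, 0) rfl
  · have hk : k' ≠ k := fun h => hne (h ▸ rfl)
    simpa [maskMap, hk] using hinc (Sum.inl (i, k')) (0, 0) (by simp [maskMap, hk])

theorem not_varIncRel_validMap_maskMap_iff (b : Fin nx → Bool) (k : Fin nc) :
    ¬ varIncRel (validMap pos neg b) (maskMap k) ↔ SatisfiesClause pos neg b k := by
  simp only [varIncRel, SatisfiesClause, not_forall]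
  constructor
  · rintro ⟨(⟨i, j⟩ | u), s, hs, hmask⟩
    · refine ⟨i, ?_⟩
      by_cases hj : j = k
      · subst hj
        cases hb : b i <;> simp_all [validMap]
      · simp_all [validMap, maskMap]
    · simp [validMap] at hs
  · rintro ⟨i, hi⟩
    refine ⟨Sum.inl (i, k), (0, 0), ?_, by simp [maskMap]⟩
    rcases hi with ⟨hp, hb⟩ | ⟨hn, hb⟩
    · simp [validMap, hp, hb]
    · simp [validMap, hn, hb]

theorem le_ncard_varIncSkyline {b : Fin nx → Bool} (hb : ∀ j, SatisfiesClause pos neg b j) :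
    nc + 1 ≤ (varIncSkyline (allMaps pos neg)).ncard := by
  obtain ⟨m, hm, hbm⟩ := exists_varIncRel_mem_varIncSkyline (allMaps_finite pos neg)
    (Or.inl ⟨b, rfl⟩ : validMap pos neg b ∈ allMaps pos neg)
  have hm_mask : m ∉ Set.range maskMap := by
    rintro ⟨k, rfl⟩
    exact (not_varIncRel_validMap_maskMap_iff pos neg b k).2 (hb k) hbm
  have hinj : Function.Injective (maskMap (nx := nx) (nc := nc)) :=
    fun k _ h => maskMap_injective (hb k).choose h
  have hsub : insert m (Set.range maskMap) ⊆ varIncSkyline (allMaps pos neg) :=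
    Set.insert_subset hm (Set.range_subset_iff.2 fun k =>
      maskMap_mem_varIncSkyline pos neg (hb k).choose k)
  calc nc + 1 = (insert m (Set.range maskMap)).ncard := by
        rw [Set.ncard_insert_of_notMem hm_mask, Set.ncard_range_of_injective hinj, Nat.card_fin]
    _ ≤ _ := Set.ncard_le_ncard hsub ((allMaps_finite pos neg).subset fun _ h => h.1)

theorem exists_validMap_mem_varIncSkyline (h : nc < (varIncSkyline (allMaps pos neg)).ncard) :
    ∃ b, validMap pos neg b ∈ varIncSkyline (allMaps pos neg) := by
  by_contra! hnone
  have hsub : varIncSkyline (allMaps pos neg) ⊆ Set.range maskMap := by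
    rintro m hm
    rcases hm.1 with ⟨b, rfl⟩ | ⟨k, rfl⟩
    · exact absurd hm (hnone b)
    · exact ⟨k, rfl⟩
  have hmask : (Set.range (maskMap (nx := nx) (nc := nc))).ncard ≤ nc := by
    rw [← Set.image_univ]
    simpa using Set.ncard_image_le (f := maskMap (nx := nx) (nc := nc)) Set.finite_univ
  exact absurd (Set.ncard_le_ncard hsub) (by omega)

theorem satisfiesClause_of_validMap_mem_varIncSkyline {b : Fin nx → Bool}
    (hb : validMap pos neg b ∈ varIncSkyline (allMaps pos neg)) (j : Fin nc) :
    SatisfiesClause pos neg b j :=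
  (not_varIncRel_validMap_maskMap_iff pos neg b j).1 <|
    hb.2 _ (Or.inr ⟨j, rfl⟩) (validMap_ne_maskMap pos neg b j).symm

/-- For a CNF `F` (variable `x_i` appears positively in clause `C_j`
iff `pos i j`, negatively iff `neg i j`): `F` is satisfiable iff the set of mappings of
`M` that are maximal under variable inclusion has at least `n_c + 1` elements. -/
theorem satisfiable_iff_skyline_large (nx nc : ℕ) (pos neg : Fin nx → Fin nc → Bool) :
    (∃ b : Fin nx → Bool, ∀ j : Fin nc, ∃ i : Fin nx,
        (pos i j = true ∧ b i = true) ∨ (neg i j = true ∧ b i = false)) ↔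
      nc + 1 ≤
        {m ∈ allMaps pos neg |
          ∀ m' ∈ allMaps pos neg, m' ≠ m → ¬ varIncRel m m'}.ncard := by
  change (∃ b, ∀ j, SatisfiesClause pos neg b j) ↔
    nc + 1 ≤ (varIncSkyline (allMaps pos neg)).ncard
  constructor
  · rintro ⟨b, hb⟩
    exact le_ncard_varIncSkyline pos neg hb
  · intro h
    obtain ⟨b, hb⟩ := exists_validMap_mem_varIncSkyline pos neg h
    exact ⟨b, satisfiesClause_of_validMap_mem_varIncSkyline pos neg hb⟩

end DocSpanners
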